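/- Let f : ℝ^n → ℝ be bounded below and Lipschitz continuous with some constant L' > 0, let σ : [0,∞) → [0,∞) be a forcing function, and let M ∈ ℕ. Let {w^k} ⊂ ℝ^n and {R^k} ⊂ ℝ be sequences such that for every k: f(w^k) ≤ R^k ≤ max_{0 ≤ j ≤ min(k,M)} f(w^{k−j}) and f(w^{k+1}) ≤ R^k − σ(‖w^{k+1} − w^k‖). For each k let ℓ(k) be an integer with k − min(k,M) ≤ ℓ(k) ≤ k and f(w^{ℓ(k)}) = max_{0 ≤ j ≤ min(k,M)} f(w^{k−j}). Then, setting ℓ̂(k) = ℓ(k + M + 1), one has lim_{k→∞} ‖w^k − w^{ℓ̂(k)}‖ = 0. -/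

import Mathlib

/-! With `g k = f (w k)` and steps `d i = ‖w (i + 1) - w i‖`, the reference values
`refMax g M k` are nonincreasing and bounded below, hence converge to some `F`, and so does
`g (ℓ k) = refMax g M k`. The decrease condition `g (i + 1) ≤ refMax g M i - σ (d i)` turns
`g (ℓ k - j) → F` into `σ (d (ℓ k - (j + 1))) → 0`, hence `d (ℓ k - (j + 1)) → 0` as `σ` is a
forcing function, and the Lipschitz bound then gives `g (ℓ k - (j + 1)) → F`. By induction on `j`
each of the last `M + 1` steps before `ℓ k` vanishes in the limit; since
`k < ℓ (k + M + 1) ≤ k + M + 1`, the distance from `w k` to `w (ℓ (k + M + 1))` is at most the sum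
of such steps. -/

open Filter Finset

/-- `refMax g M k = max_{0 ≤ j ≤ min(k,M)} g (k - j)`, the nonmonotone reference
maximum over the last `min(k,M)+1` values. -/
noncomputable def refMax (g : ℕ → ℝ) (M k : ℕ) : ℝ :=
  (Finset.range (min k M + 1)).sup' ⟨0, Finset.mem_range.mpr (Nat.succ_pos _)⟩ fun j => g (k - j)

section RefMax

variable {g : ℕ → ℝ} {M : ℕ}

lemma le_refMax {k j : ℕ} (hj : j ≤ min k M) : g (k - j) ≤ refMax g M k :=
  Finset.le_sup' (fun j => g (k - j)) (Finset.mem_range.mpr (Nat.lt_succ_of_le hj))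

lemma refMax_succ_le {k : ℕ} (h : g (k + 1) ≤ refMax g M k) :
    refMax g M (k + 1) ≤ refMax g M k := by
  refine Finset.sup'_le _ _ fun j hj => ?_
  rw [Finset.mem_range] at hj
  rcases j with _ | j
  · exact h
  · simpa using le_refMax (g := g) (k := k) (j := j) (by omega)

lemma tendsto_refMax_ciInf (hbdd : BddBelow (Set.range g))
    (h : ∀ k, g (k + 1) ≤ refMax g M k) :
    Tendsto (refMax g M) atTop (nhds (⨅ k, refMax g M k)) := by
  obtain ⟨B, hB⟩ := hbdd
  refine tendsto_atTop_ciInf (antitone_nat_of_succ_le fun k => refMax_succ_le (h k)) ⟨B, ?_⟩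
  rintro _ ⟨k, rfl⟩
  exact (hB ⟨k, rfl⟩).trans (le_refMax (Nat.zero_le _))

end RefMax

lemma eventually_sub_eq_sub_succ_add_one {ℓ : ℕ → ℕ} (hℓ : Tendsto ℓ atTop atTop) (j : ℕ) :
    ∀ᶠ k in atTop, ℓ k - j = ℓ k - (j + 1) + 1 := by
  filter_upwards [hℓ.eventually_ge_atTop (j + 1)] with k hk
  omega

section Descent

variable {g d m : ℕ → ℝ} {σ : ℝ → ℝ} {F L : ℝ}
  (hσ : ∀ t, 0 ≤ t → 0 ≤ σ t)
  (hforcing : ∀ t : ℕ → ℝ, (∀ k, 0 ≤ t k) →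
    Tendsto (fun k => σ (t k)) atTop (nhds 0) → Tendsto t atTop (nhds 0))
  (hd : ∀ i, 0 ≤ d i) (hm : Tendsto m atTop (nhds F))
  (hdecr : ∀ i, g (i + 1) ≤ m i - σ (d i)) (hlip : ∀ i, |g i - g (i + 1)| ≤ L * d i)
include hσ hforcing hd hm hdecr

lemma tendsto_step_of_tendsto_succ {p : ℕ → ℕ} (hp : Tendsto p atTop atTop)
    (hg : Tendsto (fun k => g (p k + 1)) atTop (nhds F)) :
    Tendsto (fun k => d (p k)) atTop (nhds 0) := by
  refine hforcing _ (fun _ => hd _) (squeeze_zero (fun _ => hσ _ (hd _))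
    (fun k => le_sub_comm.mp (hdecr (p k))) ?_)
  simpa using (hm.comp hp).sub hg

include hlip

lemma tendsto_of_tendsto_succ {p : ℕ → ℕ} (hp : Tendsto p atTop atTop)
    (hg : Tendsto (fun k => g (p k + 1)) atTop (nhds F)) :
    Tendsto (fun k => g (p k)) atTop (nhds F) := by
  have hdiff : Tendsto (fun k => g (p k) - g (p k + 1)) atTop (nhds 0) :=
    squeeze_zero_norm (fun k => hlip (p k))
      (by simpa using (tendsto_step_of_tendsto_succ hσ hforcing hd hm hdecr hp hg).const_mul L)
  simpa using hdiff.add hg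

lemma tendsto_comp_sub {ℓ : ℕ → ℕ} (hℓ : Tendsto ℓ atTop atTop)
    (h0 : Tendsto (fun k => g (ℓ k)) atTop (nhds F)) (j : ℕ) :
    Tendsto (fun k => g (ℓ k - j)) atTop (nhds F) := by
  induction j with
  | zero => simpa using h0
  | succ j ih =>
    exact tendsto_of_tendsto_succ hσ hforcing hd hm hdecr hlip
      ((tendsto_sub_atTop_nat _).comp hℓ)
      (ih.congr' ((eventually_sub_eq_sub_succ_add_one hℓ j).mono fun _ hk => congrArg g hk))

lemma tendsto_step_comp_sub {ℓ : ℕ → ℕ} (hℓ : Tendsto ℓ atTop atTop)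
    (h0 : Tendsto (fun k => g (ℓ k)) atTop (nhds F)) (j : ℕ) :
    Tendsto (fun k => d (ℓ k - (j + 1))) atTop (nhds 0) :=
  tendsto_step_of_tendsto_succ hσ hforcing hd hm hdecr ((tendsto_sub_atTop_nat _).comp hℓ)
    ((tendsto_comp_sub hσ hforcing hd hm hdecr hlip hℓ h0 j).congr'
      ((eventually_sub_eq_sub_succ_add_one hℓ j).mono fun _ hk => congrArg g hk))

end Descent

lemma sum_Ico_le_sum_range_sub {d : ℕ → ℝ} (hd : ∀ i, 0 ≤ d i) {k N m : ℕ} (hNm : N ≤ k + m) :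
    ∑ i ∈ Ico k N, d i ≤ ∑ j ∈ range m, d (N - (j + 1)) := by
  calc ∑ i ∈ Ico k N, d i
      ≤ ∑ i ∈ (range m).image fun j => N - (j + 1), d i := by
        refine Finset.sum_le_sum_of_subset_of_nonneg (fun i hi => ?_) fun i _ _ => hd i
        rw [Finset.mem_Ico] at hi
        exact Finset.mem_image.mpr ⟨N - (i + 1), Finset.mem_range.mpr (by omega), by omega⟩
    _ ≤ ∑ j ∈ range m, d (N - (j + 1)) := Finset.sum_image_le_of_nonneg fun i _ => hd i

lemma dist_le_sum_range_sub {X : Type*} [PseudoMetricSpace X] (w : ℕ → X) {k N m : ℕ}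
    (hkN : k ≤ N) (hNm : N ≤ k + m) :
    dist (w k) (w N) ≤ ∑ j ∈ range m, dist (w (N - (j + 1))) (w (N - (j + 1) + 1)) :=
  (dist_le_Ico_sum_dist w hkN).trans
    (sum_Ico_le_sum_range_sub (d := fun i => dist (w i) (w (i + 1))) (fun _ => dist_nonneg) hNm)

theorem stmt_14_general {n : ℕ}
    (f : EuclideanSpace ℝ (Fin n) → ℝ)
    (hbdd : BddBelow (Set.range f))
    (L' : ℝ)
    (hlip : ∀ u v : EuclideanSpace ℝ (Fin n), |f u - f v| ≤ L' * ‖u - v‖)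
    (σ : ℝ → ℝ) (hσnonneg : ∀ t, 0 ≤ t → 0 ≤ σ t)
    (hσforcing : ∀ t : ℕ → ℝ, (∀ k, 0 ≤ t k) →
      Tendsto (fun k => σ (t k)) atTop (nhds 0) → Tendsto t atTop (nhds 0))
    (M : ℕ)
    (w : ℕ → EuclideanSpace ℝ (Fin n)) (R : ℕ → ℝ)
    (hRhigh : ∀ k, R k ≤ refMax (fun k => f (w k)) M k)
    (hdecr : ∀ k, f (w (k + 1)) ≤ R k - σ ‖w (k + 1) - w k‖)
    (ℓ : ℕ → ℕ)
    (hℓlow : ∀ k, k - min k M ≤ ℓ k) (hℓhigh : ∀ k, ℓ k ≤ k)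
    (hℓmax : ∀ k, f (w (ℓ k)) = refMax (fun k => f (w k)) M k) :
    Tendsto (fun k => ‖w k - w (ℓ (k + M + 1))‖) atTop (nhds 0) := by
  set g : ℕ → ℝ := fun k => f (w k)
  have hgdecr : ∀ k, g (k + 1) ≤ refMax g M k - σ (dist (w k) (w (k + 1))) := fun k => by
    rw [dist_comm, dist_eq_norm]
    exact (hdecr k).trans (sub_le_sub_right (hRhigh k) _)
  have hm := tendsto_refMax_ciInf (hbdd.mono (Set.range_comp_subset_range w f))
    fun k => (hgdecr k).trans (sub_le_self _ (hσnonneg _ dist_nonneg))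
  have hℓ : Tendsto ℓ atTop atTop :=
    tendsto_atTop_mono (fun k => by have := hℓlow k; omega) (tendsto_sub_atTop_nat M)
  have hsteps (j : ℕ) : Tendsto (fun k => dist (w (ℓ (k + M + 1) - (j + 1)))
      (w (ℓ (k + M + 1) - (j + 1) + 1))) atTop (nhds 0) :=
    (tendsto_step_comp_sub hσnonneg hσforcing (fun _ => dist_nonneg) hm hgdecr
      (fun i => by simpa [g, dist_eq_norm] using hlip (w i) (w (i + 1))) hℓ
      (hm.congr fun k => (hℓmax k).symm) j).comp (tendsto_add_atTop_nat (M + 1))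
  refine squeeze_zero (fun k => norm_nonneg _) (fun k => ?_)
    (by simpa using tendsto_finsetSum (range (M + 1)) fun j _ => hsteps j)
  rw [← dist_eq_norm]
  exact dist_le_sum_range_sub w (by have := hℓlow (k + M + 1); omega)
    (by have := hℓhigh (k + M + 1); omega)

/-- Lemma 1 from Grippo et al., part (iii).
If `f` is bounded below and Lipschitz, `σ` is a forcing function, the sequence
satisfies `f(w^k) ≤ R^k ≤ max_{0≤j≤min(k,M)} f(w^{k-j})` and
`f(w^{k+1}) ≤ R^k - σ(‖w^{k+1} - w^k‖)`, and for every `k`, `ℓ(k)` is an index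
in `{k - min(k,M), …, k}` attaining the reference maximum, then, with
`ℓ̂(k) = ℓ(k+M+1)`, we have `‖w^k - w^{ℓ̂(k)}‖ → 0`. -/
theorem stmt_14 {n : ℕ}
    (f : EuclideanSpace ℝ (Fin n) → ℝ)
    (hbdd : BddBelow (Set.range f))
    (L' : ℝ) (hL' : 0 < L')
    (hlip : ∀ u v : EuclideanSpace ℝ (Fin n), |f u - f v| ≤ L' * ‖u - v‖)
    (σ : ℝ → ℝ) (hσnonneg : ∀ t, 0 ≤ t → 0 ≤ σ t)
    (hσforcing : ∀ t : ℕ → ℝ, (∀ k, 0 ≤ t k) →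
      Tendsto (fun k => σ (t k)) atTop (nhds 0) → Tendsto t atTop (nhds 0))
    (M : ℕ)
    (w : ℕ → EuclideanSpace ℝ (Fin n)) (R : ℕ → ℝ)
    (hRlow : ∀ k, f (w k) ≤ R k)
    (hRhigh : ∀ k, R k ≤ refMax (fun k => f (w k)) M k)
    (hdecr : ∀ k, f (w (k + 1)) ≤ R k - σ ‖w (k + 1) - w k‖)
    (ℓ : ℕ → ℕ)
    (hℓlow : ∀ k, k - min k M ≤ ℓ k) (hℓhigh : ∀ k, ℓ k ≤ k)
    (hℓmax : ∀ k, f (w (ℓ k)) = refMax (fun k => f (w k)) M k) :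
    Tendsto (fun k => ‖w k - w (ℓ (k + M + 1))‖) atTop (nhds 0) :=
  stmt_14_general f hbdd L' hlip σ hσnonneg hσforcing M w R hRhigh hdecr ℓ hℓlow hℓhigh hℓmax
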